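/- arXiv:2509.18941 — 3 statements merged into one kernel-verified Lean document; each statement's English description precedes it below -/
import Mathlib

section
/- Let A ≀ B = (⊕_B A) ⋊ B be a restricted wreath product with A nontrivial and B infinite. Then A ≀ B contains no nontrivial finite normal subgroup. -/
/-- The subgroup of `B → A` consisting of finitely supported functions. -/
def FinMulSupp (A B : Type*) [Group A] : Subgroup (B → A) where
  carrier := {f | (Function.mulSupport f).Finite}
  one_mem' := by simp [Function.mulSupport_one]
  mul_mem' := fun {f g} hf hg =>
    Set.Finite.subset (hf.union hg) (Function.mulSupport_mul f g)
  inv_mem' := fun {f} hf => by simpa [Function.mulSupport_inv] using hf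

/-- The shift action of `B` on finitely supported functions `B → A`, by permuting the
coordinates according to left multiplication. -/
def shiftHom (A B : Type*) [Group A] [Group B] : B →* MulAut ↥(FinMulSupp A B) where
  toFun b :=
    { toFun := fun f => ⟨fun x => f.1 (b⁻¹ * x), by
        refine (f.2.image (fun y => b * y)).subset ?_
        intro x hx
        exact ⟨b⁻¹ * x, hx, by simp⟩⟩
      invFun := fun f => ⟨fun x => f.1 (b * x), by
        refine (f.2.image (fun y => b⁻¹ * y)).subset ?_
        intro x hx
        exact ⟨b * x, hx, by simp⟩⟩
      left_inv := fun f => Subtype.ext (funext fun x => by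
        simp [inv_mul_cancel_left])
      right_inv := fun f => Subtype.ext (funext fun x => by
        simp [mul_inv_cancel_left])
      map_mul' := fun f g => Subtype.ext rfl }
  map_one' := by
    refine MulEquiv.ext fun f => Subtype.ext (funext fun x => ?_)
    simp
  map_mul' := fun b₁ b₂ => by
    refine MulEquiv.ext fun f => Subtype.ext (funext fun x => ?_)
    simp [mul_assoc]

/-- The restricted wreath product `A ≀ B := (⊕_B A) ⋊ B`. -/
abbrev Wreath (A B : Type*) [Group A] [Group B] :=
  FinMulSupp A B ⋊[shiftHom A B] B

/-!
Conjugating by `b ∈ B` translates the base component by `b`, so an element whose base component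
is nontrivial at some point has infinitely many conjugates when `B` is infinite. An element with
trivial base component is some `b ∈ B`; if `b ≠ 1`, conjugating it by a function supported at
`1` produces a conjugate with nontrivial base component. Hence only `1` has finitely many
conjugates, and a finite normal subgroup, being a union of conjugacy classes, is trivial.
-/

open SemidirectProduct

namespace Wreath

variable {A B : Type*} [Group A] [Group B]

theorem left_conj_inr_apply_mul (c : B) (w : Wreath A B) (x : B) :
    ((inr c * w * (inr c)⁻¹ : Wreath A B).left : B → A) (c * x) = (w.left : B → A) x := by
  simp only [mul_left, inv_left, left_inr, right_inr, mul_right]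
  simp [shiftHom]

theorem left_conj_inl_apply (f : FinMulSupp A B) {w : Wreath A B} (hw : w.left = 1) (x : B) :
    ((inl f * w * (inl f)⁻¹ : Wreath A B).left : B → A) x =
      (f : B → A) x * ((f : B → A) (w.right⁻¹ * x))⁻¹ := by
  simp only [mul_left, inv_left, left_inl, right_inl, mul_right, hw]
  simp [shiftHom]

theorem left_eq_one_of_finite_conjugatesOf [Infinite B] {w : Wreath A B}
    (hw : (conjugatesOf w).Finite) : w.left = 1 := by
  ext x
  by_contra hx
  have hsupp : (⋃ y ∈ conjugatesOf w, Function.mulSupport (y.left : B → A)).Finite :=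
    hw.biUnion fun y _ => y.left.2
  refine (Set.infinite_range_of_injective (mul_left_injective x)).mono ?_ hsupp
  rintro _ ⟨c, rfl⟩
  refine Set.mem_biUnion (isConj_iff.2 ⟨inr c, rfl⟩) ?_
  rw [Function.mem_mulSupport, left_conj_inr_apply_mul]
  exact hx

theorem eq_one_of_finite_conjugatesOf [Nontrivial A] [Infinite B] {w : Wreath A B}
    (hw : (conjugatesOf w).Finite) : w = 1 := by
  classical
  have hleft := left_eq_one_of_finite_conjugatesOf hw
  refine SemidirectProduct.ext hleft ?_
  rw [one_right]
  by_contra hright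
  obtain ⟨a, ha⟩ := exists_ne (1 : A)
  let f : FinMulSupp A B :=
    ⟨Pi.mulSingle 1 a, (Set.finite_singleton 1).subset Pi.mulSupport_mulSingle_subset⟩
  have hconj : IsConj w (inl f * w * (inl f)⁻¹) := isConj_iff.2 ⟨inl f, rfl⟩
  have hleft' := left_eq_one_of_finite_conjugatesOf (hconj.conjugatesOf_eq ▸ hw)
  have hval := congrFun (congrArg Subtype.val hleft') 1
  rw [left_conj_inl_apply f hleft] at hval
  simp only [f, Pi.mulSingle_apply, inv_mul_eq_one, hright, if_false] at hval
  exact ha (by simpa using hval)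

end Wreath

/-- If `A` is nontrivial and `B` infinite, then the restricted wreath product `A ≀ B`
has no nontrivial finite normal subgroup. -/
theorem wreath_no_finite_normal_subgroup
    (A B : Type*) [Group A] [Group B] [Nontrivial A] [Infinite B]
    (N : Subgroup (Wreath A B)) (hN : N.Normal)
    (hfin : (N : Set (Wreath A B)).Finite) :
    N = ⊥ :=
  (Subgroup.eq_bot_iff_forall N).2 fun _ hn =>
    Wreath.eq_one_of_finite_conjugatesOf (hfin.subset (Group.conjugates_subset_normal hn))
end

section
/- Let A and B be groups. The restricted wreath product A ≀ B is finitely generated if and only if both A and B are finitely generated. -/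
/-!
`B` is a quotient of `A ≀ B`. For `A`, note that the coordinates of the elements of the subgroup
generated by a set `S ⊆ A ≀ B` lie in the subgroup of `A` generated by the coordinates of the
elements of `S`; a finite `S` has finitely many coordinates, and `A` sits inside `A ≀ B` as the
coordinate at `1`.

Conversely, conjugating `δ₁(a)` (the function with value `a` at `1`) by `b ∈ B` gives `δ_b(a)`,
and the `δ_x(a)` generate `⊕_B A`. Hence generators of `A` placed at `1`, together with
generators of `B`, generate `A ≀ B`.
-/

open Subgroup Function SemidirectProduct

namespace SemidirectProduct

variable {N G : Type*} [Group N] [Group G] {φ : G →* MulAut N}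

theorem fg_of_closure_iUnion_image_eq_top [hG : Group.FG G] {T : Set N} (hT : T.Finite)
    (hT_gen : closure (⋃ g, φ g '' T) = ⊤) : Group.FG (N ⋊[φ] G) := by
  obtain ⟨U, hU_gen, hU⟩ := Group.fg_iff.mp hG
  set H := closure (inl '' T ∪ inr '' U : Set (N ⋊[φ] G))
  have h_inr : ∀ g, inr g ∈ H := by
    have : (⊤ : Subgroup G).map inr ≤ H := by
      rw [← hU_gen, MonoidHom.map_closure]
      exact closure_mono Set.subset_union_right
    exact fun g => this ⟨g, mem_top g, rfl⟩
  have h_inl : ∀ n, inl n ∈ H := by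
    have : (⊤ : Subgroup N).map inl ≤ H := by
      rw [← hT_gen, MonoidHom.map_closure, closure_le]
      rintro _ ⟨_, ⟨_, ⟨g, rfl⟩, t, ht, rfl⟩, rfl⟩
      rw [inl_aut]
      exact H.mul_mem (H.mul_mem (h_inr g) (subset_closure (.inl ⟨t, ht, rfl⟩))) (h_inr g⁻¹)
    exact fun n => this ⟨n, mem_top n, rfl⟩
  refine Group.fg_iff.mpr ⟨inl '' T ∪ inr '' U, eq_top_iff.mpr fun w _ => ?_,
    (hT.image _).union (hU.image _)⟩
  rw [← inl_left_mul_inr_right w]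
  exact H.mul_mem (h_inl _) (h_inr _)

end SemidirectProduct

namespace FinMulSupp

variable {A B : Type*} [Group A]

theorem finite_range (f : FinMulSupp A B) : (Set.range (f : B → A)).Finite :=
  ((f.2.image _).insert 1).subset (range_subset_insert_image_mulSupport _)

noncomputable def single [DecidableEq B] (x : B) : A →* FinMulSupp A B :=
  (MonoidHom.mulSingle (fun _ => A) x).codRestrict _ fun _ =>
    (Set.finite_singleton x).subset Pi.mulSupport_mulSingle_subset

variable [DecidableEq B]

@[simp]
theorem coe_single (x : B) (a : A) : (single x a : B → A) = Pi.mulSingle x a := rfl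

theorem shiftHom_single [Group B] (b x : B) (a : A) :
    shiftHom A B b (single x a) = single (b * x) a := by
  ext y
  simp [shiftHom, Pi.mulSingle_apply, inv_mul_eq_iff_eq_mul]

theorem iSup_range_single : ⨆ x : B, (single x : A →* _).range = ⊤ := by
  set K := ⨆ x : B, (single x : A →* _).range
  suffices ∀ s : Finset B, ∀ f : FinMulSupp A B, mulSupport (f : B → A) ⊆ s → f ∈ K from
    eq_top_iff.mpr fun f _ => this f.2.toFinset f f.2.coe_toFinset.superset
  intro s
  induction s using Finset.induction_on with
  | empty =>
    intro f hf
    rw [Finset.coe_empty, Set.subset_empty_iff, mulSupport_eq_empty_iff] at hf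
    rw [show f = 1 from Subtype.ext hf]
    exact K.one_mem
  | insert x s _ ih =>
    intro f hf
    have h_single : single x (f.1 x) ∈ K := mem_iSup_of_mem x (MonoidHom.mem_range.mpr ⟨_, rfl⟩)
    have h_rest : f * (single x (f.1 x))⁻¹ ∈ K := by
      refine ih _ fun y hy => ?_
      by_cases hyx : y = x
      · simp [hyx] at hy
      · have := hf (show y ∈ mulSupport (f : B → A) by simpa [hyx] using hy)
        simpa [hyx] using this
    simpa using K.mul_mem h_rest h_single

end FinMulSupp

namespace Wreath

variable {A B : Type*} [Group A] [Group B]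

theorem apply_left_mem_of_mem_closure {S : Set (Wreath A B)} {H : Subgroup A}
    (hS : ∀ w ∈ S, ∀ x, (w.left : B → A) x ∈ H) {w : Wreath A B} (hw : w ∈ closure S) (x : B) :
    (w.left : B → A) x ∈ H := by
  induction hw using closure_induction generalizing x with
  | mem w hw => exact hS w hw x
  | one => exact H.one_mem
  | mul w w' _ _ hw hw' => exact H.mul_mem (hw x) (hw' _)
  | inv w _ hw => exact H.inv_mem (hw _)

theorem fg_left_of_fg [hW : Group.FG (Wreath A B)] : Group.FG A := by
  classical
  obtain ⟨S, hS_gen, hS⟩ := Group.fg_iff.mp hW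
  set T := ⋃ w ∈ S, Set.range (w.left : B → A)
  have h_coord : ∀ w ∈ S, ∀ x, (w.left : B → A) x ∈ closure T := fun w hw x =>
    subset_closure (Set.mem_biUnion hw ⟨x, rfl⟩)
  refine Group.fg_iff.mpr ⟨T, eq_top_iff.mpr fun a _ => ?_,
    hS.biUnion fun w _ => FinMulSupp.finite_range w.left⟩
  have h_mem : inl (FinMulSupp.single 1 a) ∈ closure S := hS_gen ▸ mem_top _
  simpa using apply_left_mem_of_mem_closure h_coord h_mem 1

theorem fg_of_fg_of_fg [hA : Group.FG A] [Group.FG B] : Group.FG (Wreath A B) := by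
  classical
  obtain ⟨U, hU_gen, hU⟩ := Group.fg_iff.mp hA
  refine fg_of_closure_iUnion_image_eq_top (hU.image (FinMulSupp.single 1)) ?_
  simp_rw [Set.image_image, FinMulSupp.shiftHom_single, mul_one]
  rw [Subgroup.closure_iUnion]
  simp_rw [← MonoidHom.map_closure, hU_gen, ← MonoidHom.range_eq_map]
  exact FinMulSupp.iSup_range_single

end Wreath

/-- The restricted wreath product `A ≀ B` is finitely generated if and only if both
`A` and `B` are finitely generated. -/
theorem wreath_fg_iff (A B : Type*) [Group A] [Group B] :
    Group.FG (Wreath A B) ↔ Group.FG A ∧ Group.FG B := by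
  refine ⟨fun _ => ⟨Wreath.fg_left_of_fg (B := B), ?_⟩, fun ⟨_, _⟩ => Wreath.fg_of_fg_of_fg⟩
  exact Group.fg_of_surjective (rightHom_surjective (φ := shiftHom A B))
end

section
/- In the restricted wreath product A ≀ B, the subgroup B (the acting factor) is almost malnormal: for every g ∈ A ≀ B, if B ∩ gBg⁻¹ is infinite then g ∈ B. -/
/-- The acting factor `B`, viewed as a subgroup of `A ≀ B`. -/
def baseFactor (A B : Type*) [Group A] [Group B] : Subgroup (Wreath A B) :=
  (SemidirectProduct.inr : B →* Wreath A B).range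

/-- In `A ≀ B`, the subgroup `B` is almost malnormal: if `B ∩ gBg⁻¹` is infinite then
`g ∈ B`. -/
theorem wreath_base_almost_malnormal
    (A B : Type*) [Group A] [Group B] (g : Wreath A B)
    (h : ((baseFactor A B : Set (Wreath A B)) ∩
        ((fun x => g * x * g⁻¹) '' (baseFactor A B : Set (Wreath A B)))).Infinite) :
    g ∈ baseFactor A B := by
  classical
  by_cases hc : g.left = 1
  · exact ⟨g.right, SemidirectProduct.ext (by simp [hc]) (by simp)⟩
  · exfalso
    obtain ⟨s, hs⟩ : ∃ s, (g.left : B → A) s ≠ 1 := by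
      by_contra hcon
      push_neg at hcon
      exact hc (Subtype.ext (funext fun x => hcon x))
    -- every element x of the intersection satisfies `shiftHom x.right g.left = g.left`
    have key : ∀ x ∈ ((baseFactor A B : Set (Wreath A B)) ∩
        ((fun x => g * x * g⁻¹) '' (baseFactor A B : Set (Wreath A B)))),
        shiftHom A B x.right g.left = g.left := by
      rintro x ⟨⟨b, rfl⟩, y, ⟨b', rfl⟩, hx⟩
      have hright := congrArg SemidirectProduct.right hx
      simp only [SemidirectProduct.mul_right, SemidirectProduct.inv_right,
        SemidirectProduct.right_inr, mul_assoc] at hright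
      have hleft : g.left * (shiftHom A B (g.right * (b' * g.right⁻¹)) g.left)⁻¹ = 1 := by
        have h0 := congrArg SemidirectProduct.left hx
        simpa [SemidirectProduct.mul_left, SemidirectProduct.inv_left,
          SemidirectProduct.left_inr, map_mul, map_inv, MulAut.mul_apply,
          mul_assoc] using h0
      rw [hright] at hleft
      have : shiftHom A B b g.left = g.left := by
        have := eq_inv_of_mul_eq_one_right hleft
        exact inv_injective this
      simpa [SemidirectProduct.right_inr] using this
    -- the map x ↦ x.right * s sends the intersection into the finite support of g.left
    set S := ((baseFactor A B : Set (Wreath A B)) ∩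
        ((fun x => g * x * g⁻¹) '' (baseFactor A B : Set (Wreath A B)))) with hS
    have himg : (fun x : Wreath A B => x.right * s) '' S ⊆
        Function.mulSupport (g.left : B → A) := by
      rintro _ ⟨x, hx, rfl⟩
      have hfix := key x hx
      have h1 := congrFun (congrArg Subtype.val hfix) (x.right * s)
      have h2 : ((shiftHom A B x.right g.left : ↥(FinMulSupp A B)) : B → A) (x.right * s)
          = (g.left : B → A) (x.right⁻¹ * (x.right * s)) := rfl
      rw [h2, inv_mul_cancel_left] at h1
      intro hcontra
      exact hs (h1 ▸ hcontra)
    have hinj : Set.InjOn (fun x : Wreath A B => x.right * s) S := by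
      rintro x ⟨⟨b, rfl⟩, -⟩ y ⟨⟨b', rfl⟩, -⟩ hxy
      simp only [SemidirectProduct.right_inr, mul_left_inj] at hxy
      rw [hxy]
    have hfin : S.Finite :=
      Set.Finite.of_finite_image (g.left.2.subset himg) hinj
    exact h hfin
end
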